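/- arXiv:1708.06548 — 4 statements merged into one kernel-verified Lean document; each statement's English description precedes it below -/
import Mathlib

section
/- Let X be a real Banach space of dimension at least 2, and let u = φ + a and v = ψ + b be continuous affine functions on X with φ ≠ ψ in X*. Let h = u ∨ v (pointwise maximum). Then a continuous affine function w satisfies w ≤ h pointwise if and only if there exists t ∈ [0,1] such that w ≤ t·u + (1−t)·v pointwise; i.e., the segment [u,v] is a minimum upper bound (in the pointwise order) for the set of continuous affine minorants of h. -/
/-!
Subtracting `v` reduces everything to `f := φ - ψ ≠ 0` and `g := ζ - ψ`: the hypothesis becomes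
`g x + d ≤ max (f x + a) b`. On `ker f` the linear form `g` is bounded above, so it vanishes
there and `g = t • f`. As `f` is onto, this leaves `t * r + d ≤ max (r + a) b` for all scalars
`r`; comparing slopes as `r → ±∞` gives `0 ≤ t ≤ 1`, and the kink `r = b - a` gives
`d ≤ t * a + (1 - t) * b`, which is exactly `w ≤ t • u + (1 - t) • v`.
-/

open Set LinearMap

section Field

variable {𝕜 E : Type*} [Field 𝕜] [AddCommGroup E] [Module 𝕜 E]

theorem LinearMap.exists_eq_smul_of_ker_le {f g : E →ₗ[𝕜] 𝕜} (h : ker f ≤ ker g) :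
    ∃ t : 𝕜, g = t • f := by
  have hg : g ∈ Submodule.span 𝕜 (Set.range fun _ : Unit ↦ f) :=
    mem_span_of_iInf_ker_le_ker (by rwa [iInf_const])
  rw [range_const, Submodule.mem_span_singleton] at hg
  obtain ⟨t, ht⟩ := hg
  exact ⟨t, ht.symm⟩

end Field

section OrderedField

variable {𝕜 : Type*} [Field 𝕜] [LinearOrder 𝕜] [IsStrictOrderedRing 𝕜]

theorem nonneg_of_forall_le_mul {k s : 𝕜} (h : ∀ M, 0 ≤ M → k ≤ s * M) : 0 ≤ s := by
  by_contra! hs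
  have hM : 0 ≤ (min k 0 - 1) / s :=
    div_nonneg_of_nonpos (by linarith [min_le_right k 0]) hs.le
  have := h _ hM
  rw [mul_div_cancel₀ _ hs.ne] at this
  linarith [min_le_left k 0]

theorem mem_Icc_and_le_of_forall_add_le_max {t d a b : 𝕜}
    (h : ∀ r, t * r + d ≤ max (r + a) b) :
    t ∈ Icc 0 1 ∧ d ≤ t * a + (1 - t) * b := by
  have left (M : 𝕜) (hM : 0 ≤ M) : d + t * (b - a) - b ≤ t * M := by
    have := h (b - a - M)
    rw [max_eq_right (by linarith)] at this
    linarith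
  have right (M : 𝕜) (hM : 0 ≤ M) : d + t * (b - a) - b ≤ (1 - t) * M := by
    have := h (b - a + M)
    rw [max_eq_left (by linarith)] at this
    linarith
  refine ⟨⟨nonneg_of_forall_le_mul left, ?_⟩, ?_⟩
  · linarith [nonneg_of_forall_le_mul right]
  · linarith [left 0 le_rfl]

variable {E : Type*} [AddCommGroup E] [Module 𝕜 E]

theorem Submodule.le_ker_of_forall_apply_le {p : Submodule 𝕜 E} {g : E →ₗ[𝕜] 𝕜} {C : 𝕜}
    (h : ∀ x ∈ p, g x ≤ C) : p ≤ ker g := by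
  intro x hx
  rw [mem_ker]
  by_contra hgx
  have := h (((C + 1) / g x) • x) (p.smul_mem _ hx)
  rw [map_smul, smul_eq_mul, div_mul_cancel₀ _ hgx] at this
  linarith

theorem LinearMap.exists_eq_smul_of_forall_add_le_max {f g : E →ₗ[𝕜] 𝕜} (hf : f ≠ 0)
    {a b d : 𝕜} (h : ∀ x, g x + d ≤ max (f x + a) b) :
    ∃ t ∈ Icc (0 : 𝕜) 1, g = t • f ∧ d ≤ t * a + (1 - t) * b := by
  have hker : ker f ≤ ker g :=
    Submodule.le_ker_of_forall_apply_le (C := max a b - d) fun x hx ↦ by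
      have := h x
      rw [mem_ker.1 hx, zero_add] at this
      linarith
  obtain ⟨t, rfl⟩ := exists_eq_smul_of_ker_le hker
  have hslope (r : 𝕜) : t * r + d ≤ max (r + a) b := by
    obtain ⟨x, rfl⟩ := f.surjective hf r
    simpa using h x
  obtain ⟨ht, hd⟩ := mem_Icc_and_le_of_forall_add_le_max hslope
  exact ⟨t, ht, rfl, hd⟩

end OrderedField

theorem stmt_3_general {X : Type*} [NormedAddCommGroup X] [NormedSpace ℝ X]
    (φ ψ : X →L[ℝ] ℝ) (a b : ℝ) (hφψ : φ ≠ ψ)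
    (ζ : X →L[ℝ] ℝ) (d : ℝ) :
    (∀ x : X, ζ x + d ≤ max (φ x + a) (ψ x + b)) ↔
      ∃ t : ℝ, t ∈ Set.Icc (0 : ℝ) 1 ∧
        ∀ x : X, ζ x + d ≤ t * (φ x + a) + (1 - t) * (ψ x + b) := by
  constructor
  · intro h
    have hf : ((φ - ψ : X →L[ℝ] ℝ) : X →ₗ[ℝ] ℝ) ≠ 0 :=
      ContinuousLinearMap.coe_injective.ne (sub_ne_zero.2 hφψ)
    obtain ⟨t, ht, hζ, hd⟩ :=
      exists_eq_smul_of_forall_add_le_max hf (g := (ζ - ψ : X →L[ℝ] ℝ)) (a := a) (b := b)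
        fun x ↦ by
          have := h x
          rw [← sub_le_sub_iff_right (ψ x), ← max_sub_sub_right, add_sub_cancel_left] at this
          simp only [ContinuousLinearMap.toLinearMap_sub, LinearMap.sub_apply,
            ContinuousLinearMap.coe_coe, sub_add_eq_add_sub]
          linarith
    refine ⟨t, ht, fun x ↦ ?_⟩
    have hx := LinearMap.congr_fun hζ x
    simp only [ContinuousLinearMap.toLinearMap_sub, LinearMap.sub_apply, LinearMap.smul_apply,
      ContinuousLinearMap.coe_coe, smul_eq_mul] at hx
    linear_combination hd + hx
  · rintro ⟨t, ⟨ht0, ht1⟩, hw⟩ x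
    simpa using (hw x).trans
      (Convex.combo_le_max (φ x + a) (ψ x + b) ht0 (sub_nonneg.2 ht1) (by ring))

/-- If `u = φ + a`, `v = ψ + b` are continuous affine functions with
`φ ≠ ψ` and `h = u ∨ v` (pointwise max), then a continuous affine function
`w = ζ + d` satisfies `w ≤ h` pointwise iff there is `t ∈ [0,1]` with
`w ≤ t·u + (1−t)·v` pointwise. -/
theorem stmt_3 {X : Type*} [NormedAddCommGroup X] [NormedSpace ℝ X] [CompleteSpace X]
    (hdim : 2 ≤ Module.rank ℝ X)
    (φ ψ : X →L[ℝ] ℝ) (a b : ℝ) (hφψ : φ ≠ ψ)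
    (ζ : X →L[ℝ] ℝ) (d : ℝ) :
    (∀ x : X, ζ x + d ≤ max (φ x + a) (ψ x + b)) ↔
      ∃ t : ℝ, t ∈ Set.Icc (0 : ℝ) 1 ∧
        ∀ x : X, ζ x + d ≤ t * (φ x + a) + (1 - t) * (ψ x + b) :=
  stmt_3_general φ ψ a b hφψ ζ d
end

section
/- Let V be a real vector space with dim V ≥ 2, and let α : V → V be a map with α(0) = 0 that induces an order-preserving bijection of the set of finite-dimensional affine subspaces of V onto itself (ordered by inclusion, with α mapping each affine subspace S to the affine subspace α(S), and S ⊆ S' ⟺ α(S) ⊆ α(S')). Then α is a bijective linear map. -/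
/-!
Say that `s` has affine dimension at least `k + 1` when it is a finite-dimensional affine subspace
strictly containing one of affine dimension at least `k`. This notion only refers to inclusions,
so `α` preserves it: `α` maps the line `ℝ ∙ x` onto `ℝ ∙ α x`, and the plane spanned by independent
`x, y` onto the plane spanned by `α x, α y`. In the latter plane the image of the line `x + ℝ ∙ y`
misses the line `ℝ ∙ α y`, so it is parallel to it. Hence `α (x + y)` lies on `α x + ℝ ∙ α y` and,
symmetrically, on `α y + ℝ ∙ α x`, which forces `α (x + y) = α x + α y`; dependent pairs are
handled by passing through a third, independent vector. Finally, lines through `0` being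
preserved, `α (t • x) = σ t • α x` for a single `σ : ℝ → ℝ`, and additivity makes `σ` a ring
endomorphism of `ℝ`, that is, the identity.
-/

/-- A nonempty finite-dimensional affine subspace of `V`, viewed as a set. -/
def IsFDAffine {V : Type*} [AddCommGroup V] [Module ℝ V] (s : Set V) : Prop :=
  s.Nonempty ∧ ∃ A : AffineSubspace ℝ V, (A : Set V) = s ∧ FiniteDimensional ℝ A.direction

section

open Module Submodule

theorem AffineSubspace.direction_le_of_inter_eq_empty {K V P : Type*} [DivisionRing K]
    [AddCommGroup V] [Module K V] [AddTorsor V P] {s₁ s₂ s : AffineSubspace K P}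
    [FiniteDimensional K s.direction] (h₁ : s₁ ≤ s) (h₂ : s₂ ≤ s)
    (hn₁ : (s₁ : Set P).Nonempty) (hn₂ : (s₂ : Set P).Nonempty) (he : (s₁ ∩ s₂ : Set P) = ∅)
    (hdim : finrank K s.direction ≤ finrank K s₁.direction + 1) :
    s₂.direction ≤ s₁.direction := by
  have hlt : s₁.direction ⊔ s₂.direction < s.direction :=
    (sup_direction_lt_of_nonempty_of_inter_empty hn₁ hn₂ he).trans_le
      (direction_le (sup_le h₁ h₂))
  have : FiniteDimensional K ↥(s₁.direction ⊔ s₂.direction) :=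
    Submodule.finiteDimensional_of_le hlt.le
  have hsup : s₁.direction = s₁.direction ⊔ s₂.direction :=
    Submodule.eq_of_le_of_finrank_le le_sup_left (by have := finrank_lt_finrank_of_lt hlt; omega)
  exact hsup ▸ le_sup_right

variable {V : Type*} [AddCommGroup V] [Module ℝ V]

theorem isFDAffine_singleton (v : V) : IsFDAffine ({v} : Set V) :=
  ⟨Set.singleton_nonempty v, affineSpan ℝ {v}, AffineSubspace.coe_affineSpan_singleton ℝ V v, by
    rw [direction_affineSpan, vectorSpan_singleton]; infer_instance⟩

theorem isFDAffine_submodule (W : Submodule ℝ V) [FiniteDimensional ℝ W] :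
    IsFDAffine (W : Set V) :=
  ⟨⟨0, W.zero_mem⟩, W, rfl, by rw [W.toAffineSubspace_direction]; infer_instance⟩

theorem IsFDAffine.exists_submodule {s : Set V} (hs : IsFDAffine s) (h0 : (0 : V) ∈ s) :
    ∃ W : Submodule ℝ V, (W : Set V) = s := by
  obtain ⟨-, A, rfl, -⟩ := hs
  refine ⟨A.direction, Set.ext fun v => ?_⟩
  simpa using (A.vadd_mem_iff_mem_direction v h0).symm

def AffineDimGE : ℕ → Set V → Prop
  | 0, s => IsFDAffine s
  | k + 1, s => IsFDAffine s ∧ ∃ t, AffineDimGE k t ∧ t ⊂ s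

theorem AffineDimGE.isFDAffine : ∀ {k : ℕ} {s : Set V}, AffineDimGE k s → IsFDAffine s
  | 0, _, h => h
  | _ + 1, _, h => h.1

theorem AffineDimGE.eq_of_subset {k : ℕ} {s t : Set V} (ht : AffineDimGE k t)
    (hs : IsFDAffine s) (hs' : ¬AffineDimGE (k + 1) s) (hts : t ⊆ s) : t = s :=
  by_contra fun hne => hs' ⟨hs, t, ht, hts.ssubset_of_ne hne⟩

theorem AffineDimGE.le_finrank_direction :
    ∀ {k : ℕ} {A : AffineSubspace ℝ V} [FiniteDimensional ℝ A.direction],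
      AffineDimGE k (A : Set V) → k ≤ finrank ℝ A.direction
  | 0, _, _, _ => Nat.zero_le _
  | _ + 1, A, _, ⟨_, t, ht, htA⟩ => by
    obtain ⟨hne, B, rfl, hB⟩ := ht.isFDAffine
    have hlt := AffineSubspace.direction_lt_of_nonempty (SetLike.coe_ssubset_coe.1 htA) hne
    exact ht.le_finrank_direction.trans_lt (finrank_lt_finrank_of_lt hlt)

theorem not_affineDimGE_of_finrank_lt {k : ℕ} {W : Submodule ℝ V} [FiniteDimensional ℝ W]
    (h : finrank ℝ W < k) : ¬AffineDimGE k (W : Set V) := fun hW => by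
  have : FiniteDimensional ℝ W.toAffineSubspace.direction := by
    rw [W.toAffineSubspace_direction]; infer_instance
  have := hW.le_finrank_direction (A := W.toAffineSubspace)
  rw [W.toAffineSubspace_direction] at this
  omega

theorem AffineDimGE.succ_of_lt {k : ℕ} {W W' : Submodule ℝ V} [FiniteDimensional ℝ W']
    (h : AffineDimGE k (W : Set V)) (hlt : W < W') : AffineDimGE (k + 1) (W' : Set V) :=
  ⟨isFDAffine_submodule W', W, h, SetLike.coe_ssubset_coe.2 hlt⟩

theorem notMem_span_singleton_of_linearIndependent {v w : V} (h : LinearIndependent ℝ ![v, w]) :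
    w ∉ ℝ ∙ v := by
  intro hw
  obtain ⟨a, rfl⟩ := mem_span_singleton.1 hw
  exact (LinearIndependent.pair_iff' (h.ne_zero 0)).1 h a rfl

theorem affineDimGE_one_span_singleton {v : V} (hv : v ≠ 0) :
    AffineDimGE 1 ((ℝ ∙ v : Submodule ℝ V) : Set V) :=
  AffineDimGE.succ_of_lt (W := ⊥) (isFDAffine_submodule ⊥)
    (bot_lt_iff_ne_bot.2 (by simpa using hv))

theorem affineDimGE_two_span_pair {v w : V} (h : LinearIndependent ℝ ![v, w]) :
    AffineDimGE 2 ((ℝ ∙ v ⊔ ℝ ∙ w : Submodule ℝ V) : Set V) :=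
  (affineDimGE_one_span_singleton (h.ne_zero 0)).succ_of_lt <| left_lt_sup.2 <|
    (span_singleton_le_iff_mem w _).not.2 (notMem_span_singleton_of_linearIndependent h)

theorem finrank_span_pair_le (v w : V) : finrank ℝ ↥(ℝ ∙ v ⊔ ℝ ∙ w) ≤ 2 :=
  (finrank_add_le_finrank_add_finrank _ _).trans <|
    add_le_add (finrank_span_le_card ({v} : Set V)) (finrank_span_le_card ({w} : Set V))

theorem affineDimGE_image_iff {α : V → V} (hα : Function.Bijective α)
    (hfd : ∀ s : Set V, IsFDAffine (α '' s) ↔ IsFDAffine s) :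
    ∀ {k : ℕ} {s : Set V}, AffineDimGE k (α '' s) ↔ AffineDimGE k s
  | 0, s => hfd s
  | k + 1, s => by
    rw [AffineDimGE, AffineDimGE, hfd, (Set.image_surjective.2 hα.2).exists]
    simp only [affineDimGE_image_iff hα hfd (k := k), ssubset_iff_subset_not_subset,
      Set.image_subset_image_iff hα.1]

structure PreservesFDAffine (α : V → V) : Prop where
  bijective : Function.Bijective α
  map_zero : α 0 = 0
  isFDAffine_image_iff : ∀ s : Set V, IsFDAffine (α '' s) ↔ IsFDAffine s

namespace PreservesFDAffine

variable {α : V → V} (hα : PreservesFDAffine α)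
include hα

theorem apply_ne_zero {x : V} (hx : x ≠ 0) : α x ≠ 0 :=
  hα.map_zero ▸ hα.bijective.1.ne hx

theorem image_span_singleton {x : V} (hx : x ≠ 0) : α '' (ℝ ∙ x) = ℝ ∙ α x := by
  have hL := (hα.isFDAffine_image_iff _).2 (isFDAffine_submodule (ℝ ∙ x))
  obtain ⟨W, hW⟩ := hL.exists_submodule ⟨0, zero_mem _, hα.map_zero⟩
  refine ((affineDimGE_one_span_singleton (hα.apply_ne_zero hx)).eq_of_subset hL ?_ ?_).symm
  · rw [affineDimGE_image_iff hα.bijective hα.isFDAffine_image_iff]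
    exact not_affineDimGE_of_finrank_lt ((finrank_span_singleton hx).trans_lt one_lt_two)
  · rw [← hW, SetLike.coe_subset_coe, span_singleton_le_iff_mem, ← SetLike.mem_coe, hW]
    exact Set.mem_image_of_mem α (mem_span_singleton_self x)

theorem linearIndependent_pair {x y : V} (h : LinearIndependent ℝ ![x, y]) :
    LinearIndependent ℝ ![α x, α y] := by
  have hx : x ≠ 0 := h.ne_zero 0
  rw [LinearIndependent.pair_iff' (hα.apply_ne_zero hx)]
  intro a ha
  have hy : α y ∈ α '' (ℝ ∙ x) := by
    rw [hα.image_span_singleton hx, ← ha]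
    exact smul_mem _ a (mem_span_singleton_self _)
  exact notMem_span_singleton_of_linearIndependent h (hα.bijective.1.mem_set_image.1 hy)

theorem image_span_pair {x y : V} (h : LinearIndependent ℝ ![x, y]) :
    α '' ↑(ℝ ∙ x ⊔ ℝ ∙ y) = ↑(ℝ ∙ α x ⊔ ℝ ∙ α y) := by
  have hP := (hα.isFDAffine_image_iff _).2 (isFDAffine_submodule (ℝ ∙ x ⊔ ℝ ∙ y))
  obtain ⟨W, hW⟩ := hP.exists_submodule ⟨0, zero_mem _, hα.map_zero⟩
  have hmem : ∀ v ∈ ℝ ∙ x ⊔ ℝ ∙ y, α v ∈ W := fun v hv => by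
    rw [← SetLike.mem_coe, hW]; exact Set.mem_image_of_mem α hv
  refine ((affineDimGE_two_span_pair (hα.linearIndependent_pair h)).eq_of_subset hP ?_ ?_).symm
  · rw [affineDimGE_image_iff hα.bijective hα.isFDAffine_image_iff]
    exact not_affineDimGE_of_finrank_lt ((finrank_span_pair_le x y).trans_lt (by norm_num))
  · rw [← hW, SetLike.coe_subset_coe]
    exact sup_le
      ((span_singleton_le_iff_mem _ _).2 (hmem x (mem_sup_left (mem_span_singleton_self x))))
      ((span_singleton_le_iff_mem _ _).2 (hmem y (mem_sup_right (mem_span_singleton_self y))))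

theorem apply_add_sub_apply_mem_span_singleton {x y : V} (h : LinearIndependent ℝ ![x, y]) :
    α (x + y) - α x ∈ ℝ ∙ α y := by
  have hy : y ≠ 0 := h.ne_zero 1
  set M : AffineSubspace ℝ V := AffineSubspace.mk' x (ℝ ∙ y)
  have hxM : x ∈ M := AffineSubspace.self_mem_mk' x (ℝ ∙ y)
  have hxyM : x + y ∈ M := AffineSubspace.mem_mk'.2 (by simp [mem_span_singleton_self])
  have hMP : (M : Set V) ⊆ ↑(ℝ ∙ x ⊔ ℝ ∙ y) := fun q hq => by
    simpa using add_mem (mem_sup_right (AffineSubspace.mem_mk'.1 hq))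
      (mem_sup_left (mem_span_singleton_self x) : x ∈ ℝ ∙ x ⊔ ℝ ∙ y)
  have hMy : (ℝ ∙ y : Set V) ∩ M = ∅ := Set.eq_empty_of_forall_notMem fun q ⟨hqy, hqM⟩ =>
    notMem_span_singleton_of_linearIndependent (LinearIndependent.pair_symm_iff.1 h) <| by
      simpa using sub_mem hqy (AffineSubspace.mem_mk'.1 hqM)
  have hMfd : IsFDAffine (M : Set V) :=
    ⟨⟨x, hxM⟩, M, rfl, by rw [AffineSubspace.direction_mk']; infer_instance⟩
  obtain ⟨hne, B, hB, -⟩ := (hα.isFDAffine_image_iff _).2 hMfd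
  have hmemB : ∀ v ∈ M, α v ∈ B := fun v hv => by
    rw [← SetLike.mem_coe, hB]; exact Set.mem_image_of_mem α hv
  set P : Submodule ℝ V := ℝ ∙ α x ⊔ ℝ ∙ α y
  have : FiniteDimensional ℝ P.toAffineSubspace.direction := by
    rw [toAffineSubspace_direction]; infer_instance
  have hdir : B.direction ≤ ℝ ∙ α y := by
    have hdir := AffineSubspace.direction_le_of_inter_eq_empty
      (s := P.toAffineSubspace) (s₁ := (ℝ ∙ α y).toAffineSubspace) (s₂ := B) ?_ ?_
      ⟨0, (ℝ ∙ α y).zero_mem⟩ (hB ▸ hne) ?_ ?_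
    · rwa [toAffineSubspace_direction] at hdir
    · exact fun v hv => mem_sup_right hv
    · intro v hv
      have : v ∈ α '' ↑(ℝ ∙ x ⊔ ℝ ∙ y) := Set.image_mono hMP (hB ▸ hv)
      rwa [hα.image_span_pair h] at this
    · change (ℝ ∙ α y : Set V) ∩ B = ∅
      rw [hB, ← hα.image_span_singleton hy, ← Set.image_inter hα.bijective.1, hMy,
        Set.image_empty]
    · rw [toAffineSubspace_direction, toAffineSubspace_direction,
        finrank_span_singleton (hα.apply_ne_zero hy)]
      exact finrank_span_pair_le _ _
  simpa using hdir <| AffineSubspace.vsub_mem_direction (hmemB _ hxyM) (hmemB _ hxM)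

theorem map_add_of_linearIndependent {x y : V} (h : LinearIndependent ℝ ![x, y]) :
    α (x + y) = α x + α y := by
  obtain ⟨a, ha⟩ := mem_span_singleton.1 (hα.apply_add_sub_apply_mem_span_singleton h)
  obtain ⟨b, hb⟩ := mem_span_singleton.1
    (hα.apply_add_sub_apply_mem_span_singleton (LinearIndependent.pair_symm_iff.1 h))
  have hab : (1 : ℝ) • α x + a • α y = b • α x + (1 : ℝ) • α y := by
    rw [ha, hb, add_comm y x]; module
  have ha1 : a = 1 := ((hα.linearIndependent_pair h).eq_of_pair hab).2
  rw [← sub_eq_iff_eq_add', ← ha, ha1, one_smul]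

theorem map_add_of_notMem_span_singleton {x y : V} (h : y ∉ ℝ ∙ x) : α (x + y) = α x + α y := by
  by_cases hx : x = 0
  · simp [hx, hα.map_zero]
  refine hα.map_add_of_linearIndependent ((LinearIndependent.pair_iff' hx).2 fun a ha => ?_)
  exact h (mem_span_singleton.2 ⟨a, ha⟩)

theorem exists_apply_smul_eq_smul (x : V) (t : ℝ) : ∃ c : ℝ, α (t • x) = c • α x := by
  by_cases hx : x = 0
  · exact ⟨0, by simp [hx, hα.map_zero]⟩
  have : α (t • x) ∈ α '' (ℝ ∙ x) :=
    Set.mem_image_of_mem α (smul_mem _ t (mem_span_singleton_self x))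
  rw [hα.image_span_singleton hx] at this
  obtain ⟨c, hc⟩ := mem_span_singleton.1 this
  exact ⟨c, hc.symm⟩

variable (hdim : 2 ≤ Module.rank ℝ V)
include hdim

theorem map_add (x y : V) : α (x + y) = α x + α y := by
  by_cases hy : y ∉ ℝ ∙ x
  · exact hα.map_add_of_notMem_span_singleton hy
  rw [not_not] at hy
  by_cases hx : x = 0
  · simp [hx, hα.map_zero]
  obtain ⟨z, hz⟩ :=
    exists_linearIndependent_pair_of_one_lt_rank (lt_of_lt_of_le (by norm_num) hdim) hx
  have hzx : z ∉ ℝ ∙ x := notMem_span_singleton_of_linearIndependent hz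
  have h₁ : α (x + y + z) = α (x + y) + α z := hα.map_add_of_notMem_span_singleton
    fun h => hzx (mem_span_singleton_trans h (add_mem (mem_span_singleton_self x) hy))
  have h₂ : α (x + (y + z)) = α x + (α y + α z) := by
    rw [hα.map_add_of_notMem_span_singleton ((Submodule.add_mem_iff_right _ hy).not.2 hzx),
      hα.map_add_of_notMem_span_singleton fun h => hzx (mem_span_singleton_trans h hy)]
  rw [← add_assoc, ← add_assoc, h₁] at h₂
  exact add_right_cancel h₂

theorem apply_smul_eq_of_linearIndependent {x y : V} (h : LinearIndependent ℝ ![x, y]) {t c : ℝ}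
    (hc : α (t • x) = c • α x) : α (t • y) = c • α y := by
  obtain ⟨d, hd⟩ := hα.exists_apply_smul_eq_smul y t
  obtain ⟨e, he⟩ := hα.exists_apply_smul_eq_smul (x + y) t
  have hcd : c • α x + d • α y = e • α x + e • α y := by
    rw [← hc, ← hd, ← hα.map_add hdim, ← smul_add, he, hα.map_add hdim, smul_add]
  obtain ⟨hce, hde⟩ := (hα.linearIndependent_pair h).eq_of_pair hcd
  rw [hd, hde, hce]

theorem exists_forall_apply_smul : ∃ σ : ℝ → ℝ, ∀ (t : ℝ) (x : V), α (t • x) = σ t • α x := by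
  have hrank : 1 < Module.rank ℝ V := lt_of_lt_of_le (by norm_num) hdim
  have : Nontrivial V := rank_pos_iff_nontrivial.1 (zero_lt_one.trans hrank)
  obtain ⟨x₀, hx₀⟩ := exists_ne (0 : V)
  choose σ hσ using hα.exists_apply_smul_eq_smul x₀
  refine ⟨σ, fun t x => ?_⟩
  by_cases hx : x = 0
  · simp [hx, hα.map_zero]
  by_cases hind : LinearIndependent ℝ ![x₀, x]
  · exact hα.apply_smul_eq_of_linearIndependent hdim hind (hσ t)
  obtain ⟨a, rfl⟩ : ∃ a : ℝ, a • x₀ = x := by simpa [LinearIndependent.pair_iff' hx₀] using hind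
  have ha : a ≠ 0 := by rintro rfl; simp at hx
  obtain ⟨z, hz⟩ := exists_linearIndependent_pair_of_one_lt_rank hrank hx₀
  have hza : LinearIndependent ℝ ![z, a • x₀] := by
    simpa using (LinearIndependent.pair_smul_smul_iff isUnit_one ha.isUnit).2
      (LinearIndependent.pair_symm_iff.1 hz)
  exact hα.apply_smul_eq_of_linearIndependent hdim hza
    (hα.apply_smul_eq_of_linearIndependent hdim hz (hσ t))

theorem map_smul (t : ℝ) (x : V) : α (t • x) = t • α x := by
  obtain ⟨σ, hσ⟩ := hα.exists_forall_apply_smul hdim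
  have : Nontrivial V := rank_pos_iff_nontrivial.1 (lt_of_lt_of_le (by norm_num) hdim)
  obtain ⟨x₀, hx₀⟩ := exists_ne (0 : V)
  have hinj := smul_left_injective ℝ (hα.apply_ne_zero hx₀)
  let σ' : ℝ →+* ℝ :=
    { toFun := σ
      map_one' := hinj (by simp [← hσ])
      map_mul' := fun s t => hinj (by simp [← hσ, mul_smul])
      map_zero' := hinj (by simp [← hσ, hα.map_zero])
      map_add' := fun s t => hinj (by simp [← hσ, add_smul, hα.map_add hdim]) }
  have hσt : σ t = t := RingHom.congr_fun (Subsingleton.elim σ' (RingHom.id ℝ)) t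
  rw [hσ, hσt]

end PreservesFDAffine

end

/-- If `α : V → V` fixes `0` and induces an order preserving bijection of
the set of finite dimensional affine subspaces of `V` (with `dim V ≥ 2`), then `α`
is a bijective linear map. -/
theorem stmt_6 {V : Type*} [AddCommGroup V] [Module ℝ V]
    (hdim : 2 ≤ Module.rank ℝ V)
    (α : V → V) (h0 : α 0 = 0)
    (hmap : ∀ s : Set V, IsFDAffine s → IsFDAffine (α '' s))
    (hsurj : ∀ t : Set V, IsFDAffine t → ∃ s : Set V, IsFDAffine s ∧ α '' s = t)
    (hord : ∀ s s' : Set V, IsFDAffine s → IsFDAffine s' → (s ⊆ s' ↔ α '' s ⊆ α '' s')) :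
    IsLinearMap ℝ α ∧ Function.Bijective α := by
  have hinj : Function.Injective α := fun a b hab => by
    simpa [hab] using (hord {a} {b} (isFDAffine_singleton a) (isFDAffine_singleton b)).2
  have hsurj' : Function.Surjective α := fun w => by
    obtain ⟨s, ⟨⟨v, hv⟩, -⟩, hs⟩ := hsurj {w} (isFDAffine_singleton w)
    exact ⟨v, hs.subset (Set.mem_image_of_mem α hv)⟩
  have hα : PreservesFDAffine α := ⟨⟨hinj, hsurj'⟩, h0, fun s => ⟨fun h => by
    obtain ⟨t, ht, hts⟩ := hsurj _ h
    rwa [← Set.image_injective.2 hinj hts], hmap s⟩⟩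
  exact ⟨⟨hα.map_add hdim, hα.map_smul hdim⟩, hα.bijective⟩
end

section
/- Let X be a real Banach space and let T be a fully order preserving bijection of the cone of all lower semicontinuous extended real-valued seminorms on X onto itself (with the pointwise order). Then T maps every everywhere-finite (hence continuous) seminorm to an everywhere-finite seminorm. -/
open scoped ENNReal

/-- A lower semicontinuous extended real-valued seminorm on `X`. -/
def IsLscSeminorm {X : Type*} [NormedAddCommGroup X] [NormedSpace ℝ X]
    (p : X → ℝ≥0∞) : Prop :=
  LowerSemicontinuous p ∧ (∀ x y : X, p (x + y) ≤ p x + p y) ∧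
    ∀ (c : ℝ) (x : X), p (c • x) = ENNReal.ofReal |c| * p x

/-!
An order isomorphism `T` preserves maximal elements and the property that the seminorms above a
given one form a chain. Restrict `p` to a line `ℝ ∙ x₀` (keep `p` there, `⊤` elsewhere) to get
`c`; the seminorms above `c` form a chain, hence so do those above `d = T⁻¹ c`, and this forces `d`
to be finite only on some line `ℝ ∙ x₁`. So `d` is comparable with the restriction `c'` of `p` to
`ℝ ∙ x₁`. If `d ≤ c'`, then `c ≤ T c'` and `T c'` is not maximal, so it is finite somewhere on
`ℝ ∙ x₀`, hence at `x₀`; if `c' ≤ d`, then `T c' ≤ c` is finite at `x₀`. Either way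
`T p ≤ T c'` is finite at `x₀`.
-/

open Set Submodule

section

variable {X : Type*} [NormedAddCommGroup X] [NormedSpace ℝ X]

namespace IsLscSeminorm

variable {p q : X → ℝ≥0∞}

theorem map_zero (hp : IsLscSeminorm p) : p 0 = 0 := by
  simpa using hp.2.2 0 0

theorem sup (hp : IsLscSeminorm p) (hq : IsLscSeminorm q) : IsLscSeminorm (p ⊔ q) := by
  refine ⟨hp.1.sup hq.1, fun x y => ?_, fun c x => ?_⟩
  · exact sup_le ((hp.2.1 x y).trans (add_le_add le_sup_left le_sup_left))
      ((hq.2.1 x y).trans (add_le_add le_sup_right le_sup_right))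
  · simp only [Pi.sup_apply, hp.2.2 c x, hq.2.2 c x]
    exact (mul_max_of_nonneg _ _ zero_le).symm

theorem ne_top_of_smul_ne_top (hp : IsLscSeminorm p) {t : ℝ} {x : X} (ht : t ≠ 0)
    (h : p (t • x) ≠ ⊤) : p x ≠ ⊤ := by
  rw [hp.2.2] at h
  exact (ENNReal.lt_top_of_mul_ne_top_right h (by simpa using ht)).ne

end IsLscSeminorm

theorem isLscSeminorm_indicator_compl_top (L : Submodule ℝ X) (hL : IsClosed (L : Set X)) :
    IsLscSeminorm ((L : Set X)ᶜ.indicator fun _ => ⊤) := by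
  refine ⟨hL.isOpen_compl.lowerSemicontinuous_indicator bot_le, fun x y => ?_,
    fun c x => ?_⟩
  · by_cases hx : x ∈ L
    · by_cases hy : y ∈ L
      · simp [hx, hy, L.add_mem hx hy]
      · simp [hy]
    · simp [hx]
  · obtain rfl | hc := eq_or_ne c 0
    · simp [L.zero_mem]
    by_cases hx : x ∈ L
    · simp [hx, L.smul_mem c hx]
    · simp [hx, (L.smul_mem_iff hc).not.mpr hx, hc]

abbrev LscSeminorm (X : Type*) [NormedAddCommGroup X] [NormedSpace ℝ X] :=
  {p : X → ℝ≥0∞ // IsLscSeminorm p}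

namespace LscSeminorm

variable {p q d : LscSeminorm X} {x z : X}

/-- The seminorm equal to `p` on the line `ℝ ∙ x` and to `⊤` off it. -/
noncomputable def restrictSpan (p : LscSeminorm X) (x : X) : LscSeminorm X :=
  ⟨p.1 ⊔ ((ℝ ∙ x : Submodule ℝ X) : Set X)ᶜ.indicator fun _ => ⊤,
    p.2.sup (isLscSeminorm_indicator_compl_top _ (Submodule.closed_of_finiteDimensional _))⟩

theorem le_restrictSpan (p : LscSeminorm X) (x : X) : p ≤ p.restrictSpan x :=
  fun _ => le_sup_left

theorem restrictSpan_apply_of_mem (hz : z ∈ ℝ ∙ x) : (p.restrictSpan x).1 z = p.1 z := by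
  simp [restrictSpan, hz]

theorem restrictSpan_apply_self (p : LscSeminorm X) (x : X) :
    (p.restrictSpan x).1 x = p.1 x :=
  restrictSpan_apply_of_mem (mem_span_singleton_self x)

theorem restrictSpan_apply_of_notMem (hz : z ∉ ℝ ∙ x) : (p.restrictSpan x).1 z = ⊤ := by
  simp [restrictSpan, hz]

/-- Seminorms that are infinite off a line are determined by their value at one point of it. -/
theorem le_total_of_eq_top_of_notMem (hp : ∀ z ∉ ℝ ∙ x, p.1 z = ⊤)
    (hq : ∀ z ∉ ℝ ∙ x, q.1 z = ⊤) : p ≤ q ∨ q ≤ p := by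
  have key : ∀ {p q : LscSeminorm X}, (∀ z ∉ ℝ ∙ x, q.1 z = ⊤) → p.1 x ≤ q.1 x → p ≤ q := by
    intro p q hq h z
    by_cases hz : z ∈ ℝ ∙ x
    · obtain ⟨t, rfl⟩ := mem_span_singleton.mp hz
      rw [p.2.2.2, q.2.2.2]
      exact mul_le_mul_right h _
    · simp [hq z hz]
  exact (le_total (p.1 x) (q.1 x)).imp (key hq) (key hp)

theorem isChain_Ici_restrictSpan (p : LscSeminorm X) (x : X) :
    IsChain (· ≤ ·) (Ici (p.restrictSpan x)) := by
  have htop : ∀ r ∈ Ici (p.restrictSpan x), ∀ z ∉ ℝ ∙ x, r.1 z = ⊤ := fun r hr z hz =>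
    top_le_iff.mp (restrictSpan_apply_of_notMem (p := p) hz ▸ hr z)
  exact fun r hr r' hr' _ => le_total_of_eq_top_of_notMem (htop r hr) (htop r' hr')

/-- Otherwise the restrictions of `d` to `ℝ ∙ x` and to `ℝ ∙ z` are incomparable. -/
theorem eq_top_of_isChain_Ici (hd : IsChain (· ≤ ·) (Ici d)) (hx : x ≠ 0) (hdx : d.1 x ≠ ⊤)
    (hz : z ∉ ℝ ∙ x) : d.1 z = ⊤ := by
  by_contra hdz
  have hxz : x ∉ ℝ ∙ z := by
    intro hxz
    obtain ⟨t, rfl⟩ := mem_span_singleton.mp hxz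
    have ht : t ≠ 0 := by rintro rfl; simp at hx
    exact hz (mem_span_singleton.mpr ⟨t⁻¹, by rw [smul_smul, inv_mul_cancel₀ ht, one_smul]⟩)
  rcases hd.total (d.le_restrictSpan z) (d.le_restrictSpan x) with h | h
  · have := h x
    rw [restrictSpan_apply_of_notMem hxz, restrictSpan_apply_self] at this
    exact hdx (top_le_iff.mp this)
  · have := h z
    rw [restrictSpan_apply_of_notMem hz, restrictSpan_apply_self] at this
    exact hdz (top_le_iff.mp this)

theorem not_isMax_iff_exists_ne_top : ¬IsMax p ↔ ∃ x, x ≠ 0 ∧ p.1 x ≠ ⊤ := by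
  constructor
  · intro hp
    obtain ⟨q, hpq⟩ := not_isMax_iff.mp hp
    obtain ⟨x, hx⟩ : ∃ x, p.1 x < q.1 x := by
      have : ¬∀ x, q.1 x ≤ p.1 x := hpq.not_ge
      push Not at this
      exact this
    refine ⟨x, ?_, hx.ne_top⟩
    rintro rfl
    simp [p.2.map_zero, q.2.map_zero] at hx
  · rintro ⟨x, hx, hpx⟩ hp
    have := hp (p.le_restrictSpan 0) x
    rw [restrictSpan_apply_of_notMem (by simpa using hx)] at this
    exact hpx (top_le_iff.mp this)

/-- `q` is finite at some nonzero point, which must lie on `ℝ ∙ x`. -/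
theorem ne_top_of_restrictSpan_le (h : p.restrictSpan x ≤ q) (hq : ¬IsMax q) : q.1 x ≠ ⊤ := by
  obtain ⟨w, hw, hqw⟩ := not_isMax_iff_exists_ne_top.mp hq
  have hwx : w ∈ ℝ ∙ x := by
    by_contra hwx
    have := h w
    rw [restrictSpan_apply_of_notMem hwx] at this
    exact hqw (top_le_iff.mp this)
  obtain ⟨t, rfl⟩ := mem_span_singleton.mp hwx
  exact q.2.ne_top_of_smul_ne_top (by rintro rfl; simp at hw) hqw

end LscSeminorm

end

open LscSeminorm in
theorem stmt_9_general {X : Type*} [NormedAddCommGroup X] [NormedSpace ℝ X]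
    (T : {p : X → ℝ≥0∞ // IsLscSeminorm p} → {p : X → ℝ≥0∞ // IsLscSeminorm p})
    (hbij : Function.Bijective T)
    (hord : ∀ p q, (∀ x, p.1 x ≤ q.1 x) ↔ (∀ x, (T p).1 x ≤ (T q).1 x)) :
    ∀ p, (∀ x, p.1 x ≠ ⊤) → ∀ x, (T p).1 x ≠ ⊤ := by
  intro p hp x₀
  obtain rfl | hx₀ := eq_or_ne x₀ 0
  · simp [(T p).2.map_zero]
  let e : LscSeminorm X ≃o LscSeminorm X := ⟨Equiv.ofBijective T hbij, (hord _ _).symm⟩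
  set c := restrictSpan p x₀
  have hc : c.1 x₀ ≠ ⊤ := by rw [restrictSpan_apply_self]; exact hp x₀
  set d := e.symm c
  have hd : IsChain (· ≤ ·) (Ici d) := by
    rw [← IsChain.image_iso_iff (φ := e), e.image_Ici, e.apply_symm_apply]
    exact isChain_Ici_restrictSpan p x₀
  obtain ⟨x₁, hx₁, hdx₁⟩ := not_isMax_iff_exists_ne_top.mp <|
    e.symm.isMax_apply.not.mpr (not_isMax_iff_exists_ne_top.mpr ⟨x₀, hx₀, hc⟩)
  set c' := restrictSpan p x₁
  have hc' : (e c').1 x₀ ≠ ⊤ := by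
    rcases le_total_of_eq_top_of_notMem (fun z => eq_top_of_isChain_Ici hd hx₁ hdx₁)
      (fun z => restrictSpan_apply_of_notMem (p := p)) with h | h
    · refine ne_top_of_restrictSpan_le (e.symm_apply_le.mp h) (e.isMax_apply.not.mpr ?_)
      exact not_isMax_iff_exists_ne_top.mpr ⟨x₁, hx₁, by rw [restrictSpan_apply_self]; exact hp x₁⟩
    · exact ne_top_of_le_ne_top hc (e.le_symm_apply.mp h x₀)
  exact ne_top_of_le_ne_top hc' ((hord p c').mp (le_restrictSpan p x₁) x₀)

/-- A fully order preserving bijection of the cone of lsc extended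
real-valued seminorms on a Banach space maps everywhere-finite seminorms to
everywhere-finite seminorms. -/
theorem stmt_9 {X : Type*} [NormedAddCommGroup X] [NormedSpace ℝ X] [CompleteSpace X]
    (T : {p : X → ℝ≥0∞ // IsLscSeminorm p} → {p : X → ℝ≥0∞ // IsLscSeminorm p})
    (hbij : Function.Bijective T)
    (hord : ∀ p q, (∀ x, p.1 x ≤ q.1 x) ↔ (∀ x, (T p).1 x ≤ (T q).1 x)) :
    ∀ p, (∀ x, p.1 x ≠ ⊤) → ∀ x, (T p).1 x ≠ ⊤ :=
  stmt_9_general T hbij hord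
end

section
/- Let X be a real Banach space, x*, x₀* ∈ X* linearly independent. Then the segment [−x*, x*] = { λ x* : −1 ≤ λ ≤ 1 } equals the intersection of the line ℝ x* with the convex hull of (ℝ(x* − x₀*)) ∪ [−x₀*, x₀*]; more precisely, [−x*, x*] = (ℝ x*) ∩ co( ℝ(x* − x₀*) ∪ [−x₀*, x₀*] ) where co denotes convex hull taken inside the 2-dimensional span of x* and x₀* (equivalently, the weak*-closed convex hull). -/
/-!
By linear independence there is `y` with `x* y = x₀* y ≠ 0`. Evaluation at `y` is weak*-continuous,
vanishes on `ℝ(x* − x₀*)` and is bounded by `|x₀* y|` on `[−x₀*, x₀*]`, so it is bounded by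
`|x₀* y|` on the closed convex hull, which forces `|λ| ≤ 1` for `λx*` in the intersection.
Conversely, `λx* = λ(x* − x₀*) + λx₀*` is a limit of convex combinations of a point of the line
`ℝ(x* − x₀*)` and `λx₀* ∈ [−x₀*, x₀*]`.
-/

open Set Filter Topology

theorem Module.Dual.exists_apply_eq_zero_ne_zero {K V : Type*} [Field K] [AddCommGroup V]
    [Module K V] {f g : Module.Dual K V} (h : LinearIndependent K ![f, g]) :
    ∃ y, f y = 0 ∧ g y ≠ 0 := by
  by_contra! hker
  have hg : g ∈ Submodule.span K (range fun _ : Unit => f) :=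
    mem_span_of_iInf_ker_le_ker fun y hy => hker y (by simpa using hy)
  obtain ⟨a, rfl⟩ := Submodule.mem_span_singleton.mp (by simpa using hg)
  exact (LinearIndependent.pair_iff' (h.ne_zero 0)).mp h a rfl

theorem WeakDual.exists_apply_eq_zero_ne_zero {𝕜 E : Type*} [Field 𝕜] [TopologicalSpace 𝕜]
    [IsTopologicalRing 𝕜] [AddCommGroup E] [Module 𝕜 E] [TopologicalSpace E]
    {f g : WeakDual 𝕜 E} (h : LinearIndependent 𝕜 ![f, g]) : ∃ y, f y = 0 ∧ g y ≠ 0 := by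
  have h' : LinearIndependent 𝕜 ![((f : E →L[𝕜] 𝕜) : E →ₗ[𝕜] 𝕜), (g : E →L[𝕜] 𝕜)] :=
    LinearIndependent.pair_iff.mpr fun s t hst =>
      LinearIndependent.pair_iff.mp h s t (DFunLike.ext _ _ fun y => LinearMap.congr_fun hst y)
  exact Module.Dual.exists_apply_eq_zero_ne_zero h'

theorem segment_neg_self_eq_image {𝕜 E : Type*} [Field 𝕜] [LinearOrder 𝕜] [IsStrictOrderedRing 𝕜]
    [AddCommGroup E] [Module 𝕜 E] (x : E) :
    segment 𝕜 (-x) x = (fun r : 𝕜 => r • x) '' Icc (-1) 1 := by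
  simpa [segment_eq_Icc] using
    (image_segment 𝕜 (LinearMap.toSpanSingleton 𝕜 E x).toAffineMap (-1) 1).symm

section Convex

variable {E : Type*} [AddCommGroup E] [Module ℝ E] [TopologicalSpace E]

theorem add_mem_closure_convexHull_range_smul_union [ContinuousAdd E] [ContinuousSMul ℝ E]
    (a b : E) : a + b ∈ closure (convexHull ℝ ((range fun r : ℝ => r • a) ∪ {b})) := by
  have hlim : Tendsto (fun t : ℝ => a + t • b) (𝓝[<] 1) (𝓝 (a + b)) := by
    have hcont : Continuous fun t : ℝ => a + t • b := by fun_prop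
    simpa using (hcont.tendsto 1).mono_left nhdsWithin_le_nhds
  refine mem_closure_of_tendsto hlim ?_
  filter_upwards [Ioo_mem_nhdsLT zero_lt_one] with t ⟨ht0, ht1⟩
  -- `a + t • b = (1 - t) • ((1 - t)⁻¹ • a) + t • b` for `t < 1`
  have hcomb := convex_convexHull ℝ ((range fun r : ℝ => r • a) ∪ {b})
    (subset_convexHull ℝ _ (Or.inl ⟨(1 - t)⁻¹, rfl⟩))
    (subset_convexHull ℝ _ (Or.inr rfl)) (sub_nonneg.mpr ht1.le) ht0.le (sub_add_cancel 1 t)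
  rwa [smul_smul, mul_inv_cancel₀ (sub_ne_zero.mpr ht1.ne'), one_smul] at hcomb

theorem abs_apply_le_of_mem_closure_convexHull (φ : E →L[ℝ] ℝ) {u v p : E} (hu : φ u = 0)
    (hp : p ∈ closure (convexHull ℝ ((range fun r : ℝ => r • u) ∪ segment ℝ (-v) v))) :
    |φ p| ≤ |φ v| := by
  let K := φ ⁻¹' Icc (-|φ v|) |φ v|
  have hK : Convex ℝ K := (convex_Icc _ _).linear_preimage φ.toLinearMap
  have hvK : v ∈ K := ⟨neg_abs_le _, le_abs_self _⟩
  have hnegvK : -v ∈ K := by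
    simpa [K, map_neg] using And.intro (le_abs_self (φ v)) (neg_le_abs (φ v))
  have hsub : (range fun r : ℝ => r • u) ∪ segment ℝ (-v) v ⊆ K := by
    rintro _ (⟨s, rfl⟩ | hseg)
    · simp [K, hu]
    · exact hK.segment_subset hnegvK hvK hseg
  exact abs_le.mpr <| closure_minimal (convexHull_min hsub hK)
    (isClosed_Icc.preimage φ.continuous) hp

end Convex

theorem stmt_19_general {X : Type*} [NormedAddCommGroup X] [NormedSpace ℝ X]
    (x' x₀ : WeakDual ℝ X) (hli : LinearIndependent ℝ ![x', x₀]) :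
    segment ℝ (-x') x' =
      (Set.range fun r : ℝ => r • x') ∩
        closure (convexHull ℝ
          ((Set.range fun r : ℝ => r • (x' - x₀)) ∪ segment ℝ (-x₀) x₀)) := by
  have hli' : LinearIndependent ℝ ![x' - x₀, x₀] := by
    simpa [← sub_eq_add_neg] using LinearIndependent.pair_add_smul_left_iff (b := (-1 : ℝ)).mpr hli
  obtain ⟨y, hy, hy0⟩ := WeakDual.exists_apply_eq_zero_ne_zero hli'
  let φ : WeakDual ℝ X →L[ℝ] ℝ := WeakBilin.eval _ y
  have hφ : φ x' = φ x₀ := sub_eq_zero.mp hy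
  rw [segment_neg_self_eq_image]
  ext p
  constructor
  · rintro ⟨r, hr, rfl⟩
    have hmem := add_mem_closure_convexHull_range_smul_union (r • (x' - x₀)) (r • x₀)
    rw [← smul_add, sub_add_cancel] at hmem
    refine ⟨⟨r, rfl⟩, closure_mono (convexHull_mono (union_subset_union ?_ ?_)) hmem⟩
    · rintro _ ⟨s, rfl⟩
      exact ⟨s * r, mul_smul s r _⟩
    · rw [singleton_subset_iff, segment_neg_self_eq_image]
      exact ⟨r, hr, rfl⟩
  · rintro ⟨⟨r, rfl⟩, hp⟩
    have hr := abs_apply_le_of_mem_closure_convexHull φ hy hp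
    rw [map_smul, hφ, smul_eq_mul, abs_mul] at hr
    exact ⟨r, abs_le.mp ((mul_le_iff_le_one_left (abs_pos.mpr hy0)).mp hr), rfl⟩

/-- For linearly independent `x*, x₀*` in `X*`, the segment
`[−x*, x*]` equals the intersection of the line `ℝ x*` with the weak*-closed
convex hull of `ℝ(x* − x₀*) ∪ [−x₀*, x₀*]`. -/
theorem stmt_19 {X : Type*} [NormedAddCommGroup X] [NormedSpace ℝ X] [CompleteSpace X]
    (x' x₀ : WeakDual ℝ X) (hli : LinearIndependent ℝ ![x', x₀]) :
    segment ℝ (-x') x' =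
      (Set.range fun r : ℝ => r • x') ∩
        closure (convexHull ℝ
          ((Set.range fun r : ℝ => r • (x' - x₀)) ∪ segment ℝ (-x₀) x₀)) :=
  stmt_19_general x' x₀ hli
end
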